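/- arXiv:0705.4297 — 5 statements merged into one kernel-verified Lean document; each statement's English description precedes it below -/
import Mathlib

section
/- Suppose X is a topological space, p ∈ X, κ is a cardinal, the π-character of p in X is strictly less than the cofinality of κ, and κ ≤ the character of p in X. Then every base of X fails to be κ^op-like; that is, every base A of X contains an element U such that κ-many elements of A contain U. -/
open Cardinal Set

universe u

variable {X : Type u}

/-- `B` is a base for the topology of `X`. -/
def IsBase [TopologicalSpace X] (B : Set (Set X)) : Prop :=
  (∀ U ∈ B, IsOpen U) ∧ ∀ W : Set X, IsOpen W → ∀ p ∈ W, ∃ U ∈ B, p ∈ U ∧ U ⊆ W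

/-- `B` is a local base at `p`. -/
def IsLocalBase [TopologicalSpace X] (p : X) (B : Set (Set X)) : Prop :=
  (∀ U ∈ B, IsOpen U ∧ p ∈ U) ∧ ∀ W : Set X, IsOpen W → p ∈ W → ∃ U ∈ B, U ⊆ W

/-- `B` is a local π-base at `p`. -/
def IsLocalPiBase [TopologicalSpace X] (p : X) (B : Set (Set X)) : Prop :=
  (∀ U ∈ B, IsOpen U ∧ U.Nonempty) ∧ ∀ W : Set X, IsOpen W → p ∈ W → ∃ U ∈ B, U ⊆ W

/-- The weight of `X`: the least infinite cardinal `κ` such that `X` has a base of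
cardinality at most `κ`. -/
noncomputable def weight (X : Type u) [TopologicalSpace X] : Cardinal.{u} :=
  sInf {κ | ℵ₀ ≤ κ ∧ ∃ B : Set (Set X), IsBase B ∧ #B ≤ κ}

/-- The character of `p` in `X`. -/
noncomputable def character [TopologicalSpace X] (p : X) : Cardinal.{u} :=
  sInf {κ | ℵ₀ ≤ κ ∧ ∃ B : Set (Set X), IsLocalBase p B ∧ #B ≤ κ}

/-- The π-character of `p` in `X`. -/
noncomputable def piCharacter [TopologicalSpace X] (p : X) : Cardinal.{u} :=
  sInf {κ | ℵ₀ ≤ κ ∧ ∃ B : Set (Set X), IsLocalPiBase p B ∧ #B ≤ κ}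

/-- A family of sets (ordered by `⊆`) is `κ^op`-like if no member is contained in
`κ`-many members. -/
def IsOpLike {Y : Type u} (B : Set (Set Y)) (κ : Cardinal.{u}) : Prop :=
  ∀ U ∈ B, #{V : Set Y // V ∈ B ∧ U ⊆ V} < κ

/-- The Noetherian type of `X`: the least infinite `κ` such that `X` has a
`κ^op`-like base. -/
noncomputable def Nt (X : Type u) [TopologicalSpace X] : Cardinal.{u} :=
  sInf {κ | ℵ₀ ≤ κ ∧ ∃ B : Set (Set X), IsBase B ∧ IsOpLike B κ}

/-- `⟨F i⟩` is a `⟨#ι, κ⟩`-splitter of `X`: a sequence of finite open covers such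
that for every index set `I` of cardinality `κ` and every choice `U i ∈ F i`
(`i ∈ I`), the interior of `⋂_{i ∈ I} U i` is empty. -/
def IsSplitter [TopologicalSpace X] {ι : Type u} (F : ι → Set (Set X))
    (κ : Cardinal.{u}) : Prop :=
  (∀ i, (F i).Finite ∧ (∀ U ∈ F i, IsOpen U) ∧ ⋃₀ F i = Set.univ) ∧
  ∀ (I : Set ι) (U : ι → Set X), #I = κ → (∀ i ∈ I, U i ∈ F i) →
    interior (⋂ i ∈ I, U i) = ∅

/-- If `πχ(p,X) < cf κ ≤ κ ≤ χ(p,X)` then no base of `X` is `κ^op`-like: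
every base `A` has a member contained in `κ`-many members of `A`. -/
theorem no_opLike_base_of_piCharacter_lt_cf_character
    [TopologicalSpace X] (p : X) (κ : Cardinal.{u})
    (h1 : piCharacter p < κ.ord.cof) (h2 : κ.ord.cof ≤ κ) (h3 : κ ≤ character p) :
    ∀ A : Set (Set X), IsBase A →
      ∃ U ∈ A, κ ≤ #{V : Set X // V ∈ A ∧ U ⊆ V} := by
  intro A hA
  by_contra hcon
  push_neg at hcon
  -- π-character facts
  have hne : {κ' | ℵ₀ ≤ κ' ∧ ∃ B : Set (Set X), IsLocalPiBase p B ∧ #B ≤ κ'}.Nonempty := by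
    refine ⟨max ℵ₀ #{U : Set X | IsOpen U ∧ p ∈ U}, le_max_left _ _,
      {U : Set X | IsOpen U ∧ p ∈ U}, ⟨?_, ?_⟩, le_max_right _ _⟩
    · exact fun U hU => ⟨hU.1, ⟨p, hU.2⟩⟩
    · exact fun W hW hpW => ⟨W, ⟨hW, hpW⟩, subset_rfl⟩
  obtain ⟨hℵ, B, hB, hBcard⟩ := csInf_mem hne
  have hκℵ : ℵ₀ < κ := lt_of_le_of_lt hℵ (h1.trans_le h2)
  -- the local base at p from A
  set Ap : Set (Set X) := {U | U ∈ A ∧ p ∈ U} with hApdef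
  have hApLB : IsLocalBase p Ap := by
    constructor
    · exact fun U hU => ⟨hA.1 U hU.1, hU.2⟩
    · intro W hW hpW
      obtain ⟨U, hUA, hpU, hUW⟩ := hA.2 W hW p hpW
      exact ⟨U, ⟨hUA, hpU⟩, hUW⟩
  have hApκ : κ ≤ #Ap := by
    by_contra h
    push_neg at h
    have hch : character p ≤ max ℵ₀ #Ap :=
      csInf_le' ⟨le_max_left _ _, Ap, hApLB, le_max_right _ _⟩
    exact absurd (h3.trans hch) (not_le.2 (max_lt hκℵ h))
  -- choose a member of A inside each element of the π-base
  have hchoice : ∀ V : B, ∃ W, W ∈ A ∧ W ⊆ (V : Set X) := by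
    rintro ⟨V, hV⟩
    obtain ⟨hVopen, q, hq⟩ := hB.1 V hV
    obtain ⟨W, hWA, _, hWV⟩ := hA.2 V hVopen q hq
    exact ⟨W, hWA, hWV⟩
  choose g hgA hgsub using hchoice
  have hcover : Ap ⊆ ⋃ V : B, {U : Set X | U ∈ A ∧ g V ⊆ U} := by
    intro U hU
    obtain ⟨V, hVB, hVU⟩ := hB.2 U (hA.1 U hU.1) hU.2
    exact mem_iUnion.2 ⟨⟨V, hVB⟩, hU.1, (hgsub ⟨V, hVB⟩).trans hVU⟩
  have hBκcof : #B < κ.ord.cof := lt_of_le_of_lt hBcard h1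
  have hsup : (⨆ V : B, #{U : Set X | U ∈ A ∧ g V ⊆ U}) < κ :=
    Ordinal.iSup_lt hBκcof fun V => hcon (g V) (hgA V)
  have h4 : #Ap < κ := by
    calc #Ap ≤ #(⋃ V : B, {U : Set X | U ∈ A ∧ g V ⊆ U}) := mk_le_mk_of_subset hcover
    _ ≤ #B * ⨆ V : B, #{U : Set X | U ∈ A ∧ g V ⊆ U} := mk_iUnion_le _
    _ < κ := Cardinal.mul_lt_of_lt hκℵ.le (hBκcof.trans_le h2) hsup
  exact absurd hApκ (not_le.2 h4)
end

section
/- Suppose 𝔥 = 𝔠 (the distributivity number equals the continuum). Then there exists a sequence ⟨y_α⟩_{α<𝔠} of infinite subsets of ω such that for every I ⊆ 𝔠 of cardinality 𝔠 and every infinite x ⊆ ω, some y_α with α ∈ I splits x. (In the paper's notation: 𝔥 = 𝔠 implies 𝔰𝔰₂ ≤ 𝔠.) -/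
/-!
Fewer than `𝔥` dense open subsets of `([ω]^ω, ⊆*)` have a common element. For infinite `x`, the
infinite `z` such that `x` meets almost every gap between consecutive elements of `z` form a dense
open set; so fewer than `𝔥` infinite sets `x_i` admit a common such `z`, and the union of every
other gap of `z` splits each `x_i` (this is `𝔥 ≤ 𝔯`). Now enumerate the infinite sets as
`⟨x_α⟩_{α<𝔠}` and let `y_α` split every `x_β` with `β ≤ α`: a set `I` of size `𝔠` is unbounded in
`𝔠`, so for `x = x_β` it contains some `α ≥ β`.
-/

open Cardinal

/-- `s` splits `t`: both `t ∩ s` and `t \ s` are infinite. -/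
def Splits (s t : Set ℕ) : Prop := (t ∩ s).Infinite ∧ (t \ s).Infinite

/-- Almost inclusion `s ⊆* t`. -/
def AlmostSub (s t : Set ℕ) : Prop := (s \ t).Finite

/-- `D` is a dense open subset of `([ω]^ω, ⊆*)`. -/
def DenseOpenAI (D : Set (Set ℕ)) : Prop :=
  (∀ y ∈ D, y.Infinite) ∧
  (∀ x : Set ℕ, x.Infinite → ∃ y ∈ D, AlmostSub y x) ∧
  (∀ y ∈ D, ∀ z : Set ℕ, z.Infinite → AlmostSub z y → z ∈ D)

/-- The distributivity number `𝔥`: the least cardinality of a family of dense open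
subsets of `([ω]^ω, ⊆*)` with empty intersection. -/
noncomputable def distributivityNumber : Cardinal.{0} :=
  sInf {c | ∃ (ι : Type) (D : ι → Set (Set ℕ)), c = #ι ∧
    (∀ i, DenseOpenAI (D i)) ∧ (⋂ i, D i) = ∅}

open Filter

/-- `x` meets almost every gap `(m, m']` between consecutive elements `m < m'` of `z`. -/
def MeetsEveryGap (x z : Set ℕ) : Prop :=
  ∀ᶠ m in atTop, m ∈ z → ∃ n ∈ x, m < n ∧ ∀ m' ∈ z, m < m' → n ≤ m'

theorem exists_subset_infinite_meetsEveryGap {x w : Set ℕ} (hx : x.Infinite) (hw : w.Infinite) :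
    ∃ z ⊆ w, z.Infinite ∧ MeetsEveryGap x z := by
  choose nx hnx_mem hnx_gt using hx.exists_gt
  choose nw hnw_mem hnw_gt using hw.exists_gt
  set a : ℕ → ℕ := fun k => (nw ∘ nx)^[k + 1] 0 with ha
  have ha_succ (k : ℕ) : a (k + 1) = nw (nx (a k)) := Function.iterate_succ_apply' _ _ _
  have ha_lt (k : ℕ) : nx (a k) < a (k + 1) := ha_succ k ▸ hnw_gt _
  have ha_mono : StrictMono a := strictMono_nat_of_lt_succ fun k => (hnx_gt _).trans (ha_lt k)
  refine ⟨Set.range a, ?_, Set.infinite_range_of_injective ha_mono.injective, ?_⟩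
  · rintro _ ⟨k, rfl⟩
    simp only [ha, Function.iterate_succ_apply', Function.comp_apply]
    exact hnw_mem _
  · refine Eventually.of_forall ?_
    rintro _ ⟨k, rfl⟩
    refine ⟨nx (a k), hnx_mem _, hnx_gt _, ?_⟩
    rintro _ ⟨j, rfl⟩ hkj
    exact (ha_lt k).le.trans (ha_mono.monotone (ha_mono.lt_iff_lt.1 hkj))

theorem MeetsEveryGap.of_almostSub {x z z' : Set ℕ} (h : MeetsEveryGap x z)
    (hz' : AlmostSub z' z) : MeetsEveryGap x z' := by
  obtain ⟨B, hB⟩ := hz'.bddAbove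
  have hz'_sub : ∀ m ∈ z', B < m → m ∈ z := fun m hm hBm => by
    by_contra hmz
    exact hBm.not_ge (hB ⟨hm, hmz⟩)
  filter_upwards [h, eventually_gt_atTop B] with m hm hBm hmz'
  obtain ⟨n, hnx, hmn, hn⟩ := hm (hz'_sub m hmz' hBm)
  exact ⟨n, hnx, hmn, fun m' hm' hmm' => hn m' (hz'_sub m' hm' (hBm.trans hmm')) hmm'⟩

theorem denseOpenAI_meetsEveryGap {x : Set ℕ} (hx : x.Infinite) :
    DenseOpenAI {z | z.Infinite ∧ MeetsEveryGap x z} := by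
  refine ⟨fun z hz => hz.1, fun w hw => ?_, fun z hz z' hz' hz'z => ⟨hz', hz.2.of_almostSub hz'z⟩⟩
  obtain ⟨z, hzw, hz⟩ := exists_subset_infinite_meetsEveryGap hx hw
  exact ⟨z, hz, by simp [AlmostSub, Set.sdiff_eq_empty.2 hzw]⟩

theorem Nat.count_eq_count_add_one_of_gap {p : ℕ → Prop} [DecidablePred p] {m n : ℕ}
    (hm : p m) (hmn : m < n) (hgap : ∀ m', p m' → m < m' → n ≤ m') :
    Nat.count p n = Nat.count p m + 1 := by
  rw [← Nat.count_succ_eq_succ_count_iff.2 hm]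
  refine le_antisymm ?_ (Nat.count_monotone p hmn)
  by_contra! hlt
  obtain ⟨k, ⟨hmk, hkn⟩, hk⟩ := Nat.exists_of_count_lt_count hlt
  exact hkn.not_ge (hgap k hk hmk)

open Classical in
theorem MeetsEveryGap.eventually_exists_count_eq {x z : Set ℕ} (h : MeetsEveryGap x z)
    (hz : z.Infinite) (N : ℕ) :
    ∀ᶠ k in atTop, ∃ n ∈ x, N < n ∧ Nat.count (· ∈ z) n = k + 1 := by
  have hnth_tendsto : Tendsto (Nat.nth (· ∈ z)) atTop atTop := (Nat.nth_strictMono hz).tendsto_atTop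
  filter_upwards [hnth_tendsto.eventually (h.and (eventually_ge_atTop N))] with k ⟨hk, hNk⟩
  have hmem : Nat.nth (· ∈ z) k ∈ z := Nat.nth_mem_of_infinite hz k
  obtain ⟨n, hnx, hkn, hgap⟩ := hk hmem
  refine ⟨n, hnx, hNk.trans_lt hkn, ?_⟩
  rw [Nat.count_eq_count_add_one_of_gap hmem hkn hgap]
  exact congrArg (· + 1) (Nat.count_nth_of_infinite (p := (· ∈ z)) hz k)

open Classical in
/-- `Nat.count (· ∈ z) n = k + 1` exactly on the `k`-th gap of `z`, so this set is the union of
the even-numbered gaps. -/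
theorem splits_setOf_odd_count {x z : Set ℕ} (hz : z.Infinite) (h : MeetsEveryGap x z) :
    Splits {n | Odd (Nat.count (· ∈ z) n)} x := by
  have key (N : ℕ) : ∃ K, ∀ k ≥ K, ∃ n ∈ x, N < n ∧ Nat.count (· ∈ z) n = k + 1 :=
    eventually_atTop.1 (h.eventually_exists_count_eq hz N)
  constructor
  · refine Set.infinite_of_forall_exists_gt fun N => ?_
    obtain ⟨K, hK⟩ := key N
    obtain ⟨n, hnx, hNn, hcount⟩ := hK (2 * K) (by omega)
    exact ⟨n, ⟨hnx, by simp [hcount]⟩, hNn⟩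
  · refine Set.infinite_of_forall_exists_gt fun N => ?_
    obtain ⟨K, hK⟩ := key N
    obtain ⟨n, hnx, hNn, hcount⟩ := hK (2 * K + 1) (by omega)
    exact ⟨n, ⟨hnx, by simp [hcount, Nat.odd_add_one]⟩, hNn⟩

theorem distributivityNumber_le_mk {ι : Type} {D : ι → Set (Set ℕ)} (hD : ∀ i, DenseOpenAI (D i))
    (hempty : (⋂ i, D i) = ∅) : distributivityNumber ≤ #ι :=
  csInf_le' ⟨ι, D, rfl, hD, hempty⟩

theorem iInter_nonempty_of_mk_lt_distributivityNumber {ι : Type} (hι : #ι < distributivityNumber)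
    {D : ι → Set (Set ℕ)} (hD : ∀ i, DenseOpenAI (D i)) : (⋂ i, D i).Nonempty :=
  Set.nonempty_iff_ne_empty.2 fun hempty => (distributivityNumber_le_mk hD hempty).not_gt hι

open Classical in
theorem exists_splits_of_mk_lt_distributivityNumber {ι : Type} (hι : #ι < distributivityNumber)
    {x : ι → Set ℕ} (hx : ∀ i, (x i).Infinite) : ∃ y : Set ℕ, ∀ i, Splits y (x i) := by
  obtain ⟨z, hz⟩ := iInter_nonempty_of_mk_lt_distributivityNumber hι
    fun i => denseOpenAI_meetsEveryGap (hx i)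
  refine ⟨{n | Odd (Nat.count (· ∈ z) n)}, fun i => ?_⟩
  obtain ⟨hz_inf, hz_gap⟩ := Set.mem_iInter.1 hz i
  exact splits_setOf_odd_count hz_inf hz_gap

theorem mk_setOf_infinite_nat : #{s : Set ℕ | s.Infinite} = 𝔠 := by
  have hset : #(Set ℕ) = 𝔠 := by rw [mk_set, mk_nat, two_power_aleph0]
  have hfin : #{s : Set ℕ | s.Finite} < #(Set ℕ) :=
    hset ▸ Set.Countable.ofPred_finite.le_aleph0.trans_lt aleph0_lt_continuum
  rw [← hset, ← mk_compl_of_infinite _ hfin]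
  rfl

theorem exists_supersplitting_of_forall_exists_splits
    (hsplit : ∀ (ι : Type) (x : ι → Set ℕ), #ι < 𝔠 → (∀ i, (x i).Infinite) →
      ∃ y : Set ℕ, ∀ i, Splits y (x i)) :
    ∃ (ι : Type) (y : ι → Set ℕ), #ι = 𝔠 ∧ (∀ i, (y i).Infinite) ∧
      ∀ I : Set ι, #I = 𝔠 → ∀ x : Set ℕ, x.Infinite → ∃ i ∈ I, Splits (y i) x := by
  let ι := (𝔠).ord.ToType
  have hι : #ι = 𝔠 := by rw [mk_toType, card_ord]
  obtain ⟨e⟩ : Nonempty (ι ≃ {s : Set ℕ | s.Infinite}) :=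
    Cardinal.eq.1 (hι.trans mk_setOf_infinite_nat.symm)
  have hord : (#ι).ord = Ordinal.type (α := ι) (· < ·) := by rw [hι, Ordinal.type_toType]
  have hIic (i : ι) : #(Set.Iic i) < 𝔠 :=
    (mk_Iic_lt i hord (hι.symm ▸ aleph0_lt_continuum.le)).trans_eq hι
  choose y hy using fun i : ι => hsplit (Set.Iic i) (fun j => e j) (hIic i) fun j => (e j).2
  refine ⟨ι, y, hι, fun i => (hy i ⟨i, le_refl i⟩).1.mono Set.inter_subset_right, ?_⟩
  intro I hI x hx
  by_contra! hnot
  have hI_sub : I ⊆ Set.Iio (e.symm ⟨x, hx⟩) := fun i hi => by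
    by_contra hle
    exact hnot i hi (by simpa using hy i ⟨e.symm ⟨x, hx⟩, Set.mem_Iic.2 (not_lt.1 hle)⟩)
  have hIio : #(Set.Iio (e.symm ⟨x, hx⟩)) < #I := (mk_Iio_lt _ hord).trans_eq (hι.trans hI.symm)
  exact (mk_le_mk_of_subset hI_sub).not_gt hIio

/-- If `𝔥 = 𝔠` then `𝔰𝔰₂ ≤ 𝔠`: there is a sequence `⟨y_α⟩_{α<𝔠}` of infinite
subsets of `ω` such that for every `I ⊆ 𝔠` of size `𝔠` and every infinite `x ⊆ ω`,
some `y_α` with `α ∈ I` splits `x`. -/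
theorem h_eq_continuum_implies_supersplitting
    (h : distributivityNumber = Cardinal.continuum) :
    ∃ (ι : Type) (y : ι → Set ℕ), #ι = Cardinal.continuum ∧
      (∀ i, (y i).Infinite) ∧
      ∀ I : Set ι, #I = Cardinal.continuum →
        ∀ x : Set ℕ, x.Infinite → ∃ i ∈ I, Splits (y i) x :=
  exists_supersplitting_of_forall_exists_splits fun _ _ hι hx =>
    exists_splits_of_mk_lt_distributivityNumber (h ▸ hι) hx
end

section
/- Let X = ∏_{i∈I} X_i be a product of topological spaces, each of which is a nonsingleton T1 space (more generally, each X_i is the union of two open proper nonempty subsets). If the weight of X is at most |I|, then X has an ω^op-like base; i.e., Nt(X) = ω. -/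
open Cardinal Set

universe u

variable {X : Type u}

/-!
Fix a base `B` with `#B ≤ #ι` and an injection `g : B → ι`. Cutting each `b ∈ B` by the
two open pieces `U (g b)`, `V (g b)` of the factor `g b` gives a new base. A nonempty open
set of the product has full projection onto all but finitely many factors, so it lies
inside a cut `b ∩ π_{g b}⁻¹ U (g b)` (or `V`) for only finitely many `b`, by injectivity
of `g`: the new base is `ω^op`-like.
-/

theorem exists_isBase_card_le_weight (X : Type u) [TopologicalSpace X] :
    ∃ B : Set (Set X), IsBase B ∧ #B ≤ weight X := by
  have hne : {κ | ℵ₀ ≤ κ ∧ ∃ B : Set (Set X), IsBase B ∧ #B ≤ κ}.Nonempty :=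
    ⟨ℵ₀ ⊔ #{W : Set X | IsOpen W}, le_sup_left, {W | IsOpen W},
      ⟨fun _ hW => hW, fun W hW p hp => ⟨W, hW, hp, subset_rfl⟩⟩, le_sup_right⟩
  exact (csInf_mem hne).2

theorem nt_eq_aleph0_of_isOpLike [TopologicalSpace X] {B : Set (Set X)} (hB : IsBase B)
    (hBℵ₀ : IsOpLike B ℵ₀) : Nt X = ℵ₀ := by
  have hmem : ℵ₀ ∈ {κ | ℵ₀ ≤ κ ∧ ∃ B : Set (Set X), IsBase B ∧ IsOpLike B κ} :=
    ⟨le_rfl, B, hB, hBℵ₀⟩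
  exact le_antisymm (csInf_le' hmem) (le_csInf ⟨_, hmem⟩ fun _ hκ => hκ.1)

-- Empty cuts are discarded: `∅` would lie inside every member, and with infinitely many
-- members that breaks `ω^op`-likeness.
def refineBase {κ : Type*} (B : Set (Set X)) (W : B → κ → Set X) : Set (Set X) :=
  {C | C.Nonempty ∧ ∃ b k, C = ↑b ∩ W b k}

theorem IsBase.refineBase [TopologicalSpace X] {κ : Type*} {B : Set (Set X)}
    {W : B → κ → Set X} (hB : IsBase B) (hWo : ∀ b k, IsOpen (W b k))
    (hWc : ∀ b, ⋃ k, W b k = Set.univ) : IsBase (refineBase B W) := by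
  refine ⟨?_, fun O hO p hp => ?_⟩
  · rintro C ⟨-, b, k, rfl⟩
    exact (hB.1 b b.2).inter (hWo b k)
  · obtain ⟨b, hb, hpb, hbO⟩ := hB.2 O hO p hp
    obtain ⟨k, hpk⟩ := mem_iUnion.1 ((hWc ⟨b, hb⟩).symm ▸ mem_univ p)
    exact ⟨b ∩ W ⟨b, hb⟩ k, ⟨⟨p, hpb, hpk⟩, ⟨b, hb⟩, k, rfl⟩, ⟨hpb, hpk⟩,
      inter_subset_left.trans hbO⟩

theorem finite_setOf_image_eval_ne_univ {ι : Type*} {Y : ι → Type*}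
    [∀ i, TopologicalSpace (Y i)] {C : Set (∀ i, Y i)} (hC : IsOpen C) (hne : C.Nonempty) :
    {i | Function.eval i '' C ≠ Set.univ}.Finite := by
  classical
  obtain ⟨p, hp⟩ := hne
  obtain ⟨F, u, hu, hFC⟩ := isOpen_pi_iff.1 hC p hp
  refine F.finite_toSet.subset fun i hi => ?_
  by_contra hiF
  refine hi (eq_univ_of_forall fun y => ⟨Function.update p i y, hFC fun j hj => ?_, by simp⟩)
  rw [Function.update_of_ne (ne_of_mem_of_not_mem hj hiF)]
  exact (hu j hj).2

theorem isOpLike_refineBase_pi {ι : Type u} {Y : ι → Type u} [∀ i, TopologicalSpace (Y i)]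
    {κ : Type*} [Finite κ] {B : Set (Set (∀ i, Y i))} {g : B → ι} (hg : g.Injective)
    {T : ∀ i, κ → Set (Y i)} (hT : ∀ i k, T i k ≠ Set.univ)
    (hopen : ∀ C ∈ refineBase B (fun b k => Function.eval (g b) ⁻¹' T (g b) k), IsOpen C) :
    IsOpLike (refineBase B fun b k => Function.eval (g b) ⁻¹' T (g b) k) ℵ₀ := by
  intro C hC
  set cut : B × κ → Set (∀ i, Y i) := fun a => ↑a.1 ∩ Function.eval (g a.1) ⁻¹' T (g a.1) a.2
  have hcuts : {a | C ⊆ cut a}.Finite := by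
    refine (((finite_setOf_image_eval_ne_univ (hopen C hC) hC.1).preimage hg.injOn).prod
      finite_univ).subset fun a ha => ⟨fun himage => hT (g a.1) a.2 <|
        eq_univ_of_univ_subset (himage ▸ image_subset_iff.2 (ha.trans inter_subset_right)),
      trivial⟩
  refine ((hcuts.image cut).subset ?_).lt_aleph0
  rintro D ⟨⟨-, b, k, rfl⟩, hCD⟩
  exact ⟨(b, k), hCD, rfl⟩

/-- Each factor is the union of two nontrivial open sets; if `w(∏ X i) ≤ |ι|`, then
the product has an `ω^op`-like base, i.e. its Noetherian type is `ω`. -/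
theorem nt_bigProd_eq_aleph0 {ι : Type u} (Y : ι → Type u)
    [∀ i, TopologicalSpace (Y i)]
    (h : ∀ i, ∃ U V : Set (Y i), IsOpen U ∧ IsOpen V ∧ U.Nonempty ∧ V.Nonempty ∧
      U ∪ V = Set.univ ∧ U ≠ Set.univ ∧ V ≠ Set.univ)
    (hw : weight (∀ i, Y i) ≤ #ι) :
    Nt (∀ i, Y i) = ℵ₀ := by
  choose U V hUo hVo _ _ hcov hU hV using h
  obtain ⟨B, hB, hBw⟩ := exists_isBase_card_le_weight (∀ i, Y i)
  obtain ⟨g⟩ := (Cardinal.le_def _ _).1 (hBw.trans hw)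
  let T : ∀ i, Bool → Set (Y i) := fun i k => cond k (U i) (V i)
  have hbase : IsBase (refineBase B fun b k => Function.eval (g b) ⁻¹' T (g b) k) := by
    refine hB.refineBase (fun b k => ?_) fun b => ?_
    · exact (continuous_apply _).isOpen_preimage _ (by cases k <;> simp [T, hUo, hVo])
    · rw [← preimage_iUnion, ← union_eq_iUnion, hcov, preimage_univ]
  exact nt_eq_aleph0_of_isOpLike hbase <|
    isOpLike_refineBase_pi g.injective (by intro i k; cases k <;> simp [T, hU, hV]) hbase.1
end

section
/- For every infinite cardinal κ there exists a uniform ultrafilter p on κ such that p has an ω^op-like local base in the space u(κ) of uniform ultrafilters on κ (so the local Noetherian type of p is ω), while the character of p in u(κ) is 2^κ. -/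
open Cardinal Set

universe u

variable {X : Type u}

/-- The local Noetherian type of `p`: the least infinite `κ` such that `p` has a
`κ^op`-like local base. -/
noncomputable def locNt [TopologicalSpace X] (p : X) : Cardinal.{u} :=
  sInf {κ | ℵ₀ ≤ κ ∧ ∃ B : Set (Set X), IsLocalBase p B ∧ IsOpLike B κ}

/-- The space `u(α)` of uniform ultrafilters on `α`: ultrafilters all of whose
members have full cardinality. -/
def UUlt (α : Type u) : Type u :=
  {p : Ultrafilter α // ∀ x : Set α, x ∈ p → #x = #α}

/-- The topology on `u(α)` generated by the sets `x* = {q : x ∈ q}` for `x ⊆ α`. -/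
instance (α : Type u) : TopologicalSpace (UUlt α) :=
  TopologicalSpace.generateFrom {S | ∃ x : Set α, S = {q : UUlt α | x ∈ q.1}}

/-! Let `A` be an independent family of `2^κ` subsets of `κ`. Extend `A` to a uniform ultrafilter
`p` which also contains `κ \ y` whenever `y` is almost contained (up to fewer than `κ` points) in
infinitely many members of `A`; independence is exactly what gives this family the uniform finite
intersection property. Then every neighbourhood `y*` of `p` lies in only finitely many `a*`,
`a ∈ A`. Such `2^κ` neighbourhoods force the character to be `2^κ`, since each member of a local
base lies in only finitely many of them; and pairing the members of a local base of size `2^κ`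
with the `a*` and intersecting each pair gives an `ω^op`-like local base. -/

section LocalSplitter

variable [TopologicalSpace X] {ι : Type u}

/-- A local `⟨#ι, ω⟩`-splitter at `p`, in the paper's terminology. -/
def IsLocalSplitter (p : X) (U : ι → Set X) : Prop :=
  (∀ i, IsOpen (U i) ∧ p ∈ U i) ∧ ∀ W, IsOpen W → p ∈ W → {i | W ⊆ U i}.Finite

variable {p : X} {U : ι → Set X} {B : Set (Set X)}

theorem IsLocalSplitter.mk_le_mk_mul_aleph0 (hU : IsLocalSplitter p U) (hB : IsLocalBase p B) :
    #ι ≤ #B * ℵ₀ := by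
  choose V hVB hVU using fun i => hB.2 (U i) (hU.1 i).1 (hU.1 i).2
  refine mk_le_mk_mul_of_mk_preimage_le (fun i => (⟨V i, hVB i⟩ : B)) fun W => ?_
  have hW := hB.1 W W.2
  refine ((hU.2 W hW.1 hW.2).subset fun i hi => ?_).lt_aleph0.le
  simp only [mem_preimage, mem_singleton_iff] at hi
  exact hi ▸ hVU i

theorem IsLocalSplitter.exists_isLocalBase_isOpLike (hU : IsLocalSplitter p U)
    (hB : IsLocalBase p B) (hcard : #B ≤ #ι) : ∃ B', IsLocalBase p B' ∧ IsOpLike B' ℵ₀ := by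
  obtain ⟨V₀, hV₀, -⟩ := hB.2 univ isOpen_univ trivial
  have : Nonempty B := ⟨⟨V₀, hV₀⟩⟩
  obtain ⟨e⟩ := Cardinal.le_def B ι |>.mp hcard
  set g : ι → Set X := fun i => (Function.invFun e i).1
  have hg : ∀ V ∈ B, ∃ i, g i = V := fun V hV =>
    ⟨e ⟨V, hV⟩, by simp only [g, Function.leftInverse_invFun e.injective _]⟩
  have hgB : ∀ i, g i ∈ B := fun i => (Function.invFun e i).2
  refine ⟨range fun i => g i ∩ U i, ⟨?_, fun W hW hpW => ?_⟩, ?_⟩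
  · rintro _ ⟨i, rfl⟩
    exact ⟨((hB.1 _ (hgB i)).1).inter (hU.1 i).1, (hB.1 _ (hgB i)).2, (hU.1 i).2⟩
  · obtain ⟨V, hVB, hVW⟩ := hB.2 W hW hpW
    obtain ⟨i, rfl⟩ := hg V hVB
    exact ⟨_, ⟨i, rfl⟩, inter_subset_left.trans hVW⟩
  · rintro _ ⟨i, rfl⟩
    have hopen := ((hB.1 _ (hgB i)).1).inter (hU.1 i).1
    have hfin := (hU.2 _ hopen ⟨(hB.1 _ (hgB i)).2, (hU.1 i).2⟩).image fun j => g j ∩ U j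
    refine (hfin.subset ?_).lt_aleph0
    rintro _ ⟨⟨j, rfl⟩, hij⟩
    exact ⟨j, hij.trans inter_subset_right, rfl⟩

theorem character_eq_of_isLocalSplitter (hι : ℵ₀ ≤ #ι) (hU : IsLocalSplitter p U)
    (hB : IsLocalBase p B) (hcard : #B ≤ #ι) : character p = #ι := by
  have hmem : #ι ∈ {κ | ℵ₀ ≤ κ ∧ ∃ B : Set (Set X), IsLocalBase p B ∧ #B ≤ κ} :=
    ⟨hι, B, hB, hcard⟩
  refine le_antisymm (csInf_le' hmem) (le_csInf ⟨_, hmem⟩ ?_)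
  rintro κ ⟨hκ, B', hB', hB'κ⟩
  calc #ι ≤ #B' * ℵ₀ := hU.mk_le_mk_mul_aleph0 hB'
    _ ≤ κ * ℵ₀ := mul_le_mul_left hB'κ _
    _ = κ := mul_aleph0_eq hκ

theorem locNt_eq_aleph0_of_isLocalSplitter (hU : IsLocalSplitter p U) (hB : IsLocalBase p B)
    (hcard : #B ≤ #ι) : locNt p = ℵ₀ := by
  obtain ⟨B', hB', hop⟩ := hU.exists_isLocalBase_isOpLike hB hcard
  have hmem : ℵ₀ ∈ {κ | ℵ₀ ≤ κ ∧ ∃ B : Set (Set X), IsLocalBase p B ∧ IsOpLike B κ} :=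
    ⟨le_rfl, B', hB', hop⟩
  exact le_antisymm (csInf_le' hmem) (le_csInf ⟨_, hmem⟩ fun _ h => h.1)

end LocalSplitter

section IndependentFamily

variable {α β ι : Type u}

def IsIndependentFamily (f : ι → Set α) : Prop :=
  ∀ s t : Finset ι, Disjoint s t → #((⋂ i ∈ s, f i) \ ⋃ i ∈ t, f i : Set α) = #α

theorem IsIndependentFamily.injective [Nonempty α] {f : ι → Set α} (hf : IsIndependentFamily f) :
    Function.Injective f := by
  intro i j hij
  by_contra hne
  have := hf {i} {j} (Finset.disjoint_singleton.mpr hne)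
  simp only [Finset.mem_singleton, iInter_iInter_eq_left, iUnion_iUnion_eq_left, hij,
    _root_.sdiff_self, bot_eq_empty, mk_eq_zero] at this
  exact mk_ne_zero α this.symm

theorem IsIndependentFamily.image_equiv {f : ι → Set β} (hf : IsIndependentFamily f)
    (e : β ≃ α) : IsIndependentFamily fun i => e '' f i := by
  intro s t hst
  rw [← image_iInter₂ e.bijective, ← image_iUnion₂, ← image_sdiff e.injective,
    mk_image_eq e.injective, hf s t hst, mk_congr e]

/-- Hausdorff's independent family, on an index set of cardinality `#α`. -/
def hausdorffSet (X : Set α) : Set (Finset α × Finset (Finset α)) :=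
  open Classical in {p | {a ∈ p.1 | a ∈ X} ∈ p.2}

theorem exists_finset_filter_ne (s t : Finset (Set α)) (hst : Disjoint s t) :
    ∃ F₀ : Finset α, ∀ F, F₀ ⊆ F → ∀ X ∈ s, ∀ Y ∈ t,
      open Classical in {a ∈ F | a ∈ X} ≠ {a ∈ F | a ∈ Y} := by
  classical
  have : ∀ XY ∈ s ×ˢ t, ∃ a, ¬(a ∈ XY.1 ↔ a ∈ XY.2) := fun XY hXY => by
    rw [Finset.mem_product] at hXY
    by_contra! h
    exact Finset.disjoint_left.mp hst hXY.1 (Set.ext h ▸ hXY.2)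
  choose a ha using this
  refine ⟨(s ×ˢ t).attach.image fun XY => a XY.1 XY.2, fun F hF X hX Y hY hXY => ?_⟩
  have hmem : (X, Y) ∈ s ×ˢ t := Finset.mem_product.mpr ⟨hX, hY⟩
  have haF : a (X, Y) hmem ∈ F :=
    hF (Finset.mem_image_of_mem _ (Finset.mem_attach _ ⟨(X, Y), hmem⟩))
  exact ha (X, Y) hmem (by simpa [haF] using Finset.ext_iff.mp hXY (a (X, Y) hmem))

theorem mk_finset_prod_finset_finset [Infinite α] : #(Finset α × Finset (Finset α)) = #α := by
  rw [mk_prod, lift_id, lift_id, mk_finset_of_infinite, mk_finset_of_infinite,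
    mk_finset_of_infinite, mul_eq_self (aleph0_le_mk α)]

theorem isIndependentFamily_hausdorffSet [Infinite α] :
    IsIndependentFamily (hausdorffSet (α := α)) := by
  classical
  intro s t hst
  refine le_antisymm (mk_set_le _) ?_
  obtain ⟨F₀, hF₀⟩ := exists_finset_filter_ne s t hst
  let φ : ((F₀ : Set α)ᶜ : Set α) → Finset α × Finset (Finset α) := fun a =>
    (insert a.1 F₀, s.image fun X => {b ∈ insert a.1 F₀ | b ∈ X})
  have hφ : ∀ a, φ a ∈ (⋂ X ∈ s, hausdorffSet X) \ ⋃ Y ∈ t, hausdorffSet Y := fun a => by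
    simp only [mem_sdiff, mem_iInter, mem_iUnion, hausdorffSet, mem_ofPred_eq, Finset.mem_image, φ]
    refine ⟨fun X hX => ⟨X, hX, rfl⟩, ?_⟩
    rintro ⟨Y, hY, X, hX, hXY⟩
    exact hF₀ _ (Finset.subset_insert _ _) X hX Y hY hXY
  have hφinj : Function.Injective φ := fun a b hab =>
    Subtype.ext <| (Finset.insert_inj a.2).mp (congrArg Prod.fst hab)
  calc #(Finset α × Finset (Finset α)) = #((F₀ : Set α)ᶜ : Set α) := by
        rw [mk_finset_prod_finset_finset, mk_compl_finset_of_infinite]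
    _ ≤ _ := mk_le_of_injective (f := codRestrict φ _ hφ) fun a b hab =>
        hφinj (congrArg Subtype.val hab)

theorem exists_isIndependentFamily (α : Type u) [Infinite α] :
    ∃ f : Set α → Set α, IsIndependentFamily f := by
  obtain ⟨e⟩ := Cardinal.eq.mp (mk_finset_prod_finset_finset (α := α))
  exact ⟨_, isIndependentFamily_hausdorffSet.image_equiv e⟩

end IndependentFamily

namespace Filter

variable (α : Type u) [Infinite α]

/-- The uniform ultrafilters on `α` are exactly the ultrafilters finer than this filter. -/
def coSmall : Filter α :=
  comk (fun s => #s < #α) (by simpa using aleph0_pos.trans_le (aleph0_le_mk α))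
    (fun _ ht _ hs => (mk_le_mk_of_subset hs).trans_lt ht)
    (fun s hs t ht => (mk_union_le s t).trans_lt (add_lt_of_lt (aleph0_le_mk α) hs ht))

variable {α}

theorem mem_coSmall {s : Set α} : s ∈ coSmall α ↔ #(sᶜ : Set α) < #α := mem_comk

theorem mk_inter_eq_of_mem_coSmall {s c : Set α} (hs : #s = #α) (hc : c ∈ coSmall α) :
    #(s ∩ c : Set α) = #α := by
  refine le_antisymm (mk_set_le _) (not_lt.mp fun hlt => ?_)
  have hsub : s ⊆ (s ∩ c) ∪ cᶜ := fun x hx => (em (x ∈ c)).imp (⟨hx, ·⟩) id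
  have := (mk_le_mk_of_subset hsub).trans (mk_union_le _ _)
  exact (hs ▸ this).not_gt (add_lt_of_lt (aleph0_le_mk α) hlt (mem_coSmall.mp hc))

end Filter

namespace UUlt

open Filter TopologicalSpace

variable {α : Type u}

/-- The basic open set `x*` of the paper. -/
def basicOpen (x : Set α) : Set (UUlt α) := {q | x ∈ q.1}

theorem isTopologicalBasis_basicOpen : IsTopologicalBasis (range (basicOpen (α := α))) := by
  refine isTopologicalBasis_of_subbasis_of_finiteInter ?_ ⟨⟨univ, ?_⟩, ?_⟩
  · exact congrArg generateFrom <| ext fun S =>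
      ⟨fun ⟨x, hx⟩ => ⟨x, hx.symm⟩, fun ⟨x, hx⟩ => ⟨x, hx.symm⟩⟩
  · ext q
    exact iff_of_true univ_mem trivial
  · rintro _ ⟨x, rfl⟩ _ ⟨y, rfl⟩
    exact ⟨x ∩ y, ext fun q => inter_mem_iff⟩

theorem isOpen_basicOpen (x : Set α) : IsOpen (basicOpen x) :=
  isTopologicalBasis_basicOpen.isOpen ⟨x, rfl⟩

theorem isLocalBase_basicOpen (q : UUlt α) : IsLocalBase q (basicOpen '' {x | x ∈ q.1}) := by
  refine ⟨?_, fun W hW hqW => ?_⟩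
  · rintro _ ⟨x, hx, rfl⟩
    exact ⟨isOpen_basicOpen x, hx⟩
  · obtain ⟨_, ⟨x, rfl⟩, hqx, hxW⟩ :=
      isTopologicalBasis_basicOpen.exists_subset_of_mem_open hqW hW
    exact ⟨_, ⟨x, hqx, rfl⟩, hxW⟩

variable [Infinite α]

theorem exists_forall_mem_of_mk_sInter_eq {G : Set (Set α)}
    (hG : ∀ t ⊆ G, t.Finite → #(⋂₀ t) = #α) : ∃ q : UUlt α, ∀ x ∈ G, x ∈ q.1 := by
  have : (coSmall α ⊓ generate G).NeBot := by
    refine inf_neBot_iff.mpr fun c hc s hs => ?_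
    obtain ⟨t, htG, htf, hts⟩ := mem_generate_iff.mp hs
    have hne := (mk_inter_eq_of_mem_coSmall (hG t htG htf) hc).trans_ne
      (aleph0_pos.trans_le (aleph0_le_mk α)).ne'
    obtain ⟨a, ha, hac⟩ := mk_ne_zero_iff.mp hne |>.some
    exact ⟨a, hac, hts ha⟩
  obtain ⟨q, hq⟩ := Ultrafilter.exists_le (coSmall α ⊓ generate G)
  refine ⟨⟨q, fun x hx => le_antisymm (mk_set_le x) (not_lt.mp fun hlt => ?_)⟩,
    fun x hx => (hq.trans inf_le_right) (mem_generate_of_mem hx)⟩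
  have hxc : xᶜ ∈ q := (hq.trans inf_le_left) (mem_coSmall.mpr (by rwa [compl_compl]))
  exact q.compl_mem_iff_notMem.mp hxc hx

theorem mk_diff_lt_of_basicOpen_subset {y z : Set α} (h : basicOpen y ⊆ basicOpen z) :
    #(y \ z : Set α) < #α := by
  refine (mk_set_le _).lt_of_ne fun hyz => ?_
  obtain ⟨q, hq⟩ := exists_forall_mem_of_mk_sInter_eq (G := {y \ z}) fun t ht _ => by
    rcases subset_singleton_iff_eq.mp ht with rfl | rfl <;> simp [hyz]
  have hyzq := hq _ rfl
  have hz : z ∈ q.1 := h (mem_of_superset hyzq sdiff_subset)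
  exact q.1.empty_notMem (by simpa using inter_mem hyzq hz)

variable {ι : Type u} {f : ι → Set α}

theorem mk_sInter_eq_of_isIndependentFamily (hf : IsIndependentFamily f) {t : Set (Set α)}
    (ht : t ⊆ range f ∪ compl '' {y | {i | #(y \ f i : Set α) < #α}.Infinite}) (htf : t.Finite) :
    #(⋂₀ t) = #α := by
  classical
  set σ := f ⁻¹' t
  have hσ : σ.Finite := htf.preimage hf.injective.injOn
  set Y := {y | {i | #(y \ f i : Set α) < #α}.Infinite ∧ yᶜ ∈ t}
  have hY : Y.Finite := (htf.preimage compl_injective.injOn).subset fun _ hy => hy.2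
  have : Finite Y := hY.to_subtype
  have : ∀ y : Y, ∃ i ∉ σ, #(y.1 \ f i : Set α) < #α := fun y =>
    let ⟨i, hi, hiσ⟩ := (y.2.1.sdiff hσ).nonempty
    ⟨i, hiσ, hi⟩
  choose z hzσ hz using this
  have hz' : (range z).Finite := finite_range z
  have hdisj : Disjoint hσ.toFinset hz'.toFinset := by
    refine Finset.disjoint_left.mpr fun i hi hiz => ?_
    obtain ⟨y, rfl⟩ := hz'.mem_toFinset.mp hiz
    exact hzσ y (hσ.mem_toFinset.mp hi)
  have hsmall : ⋂ y : Y, (y.1 \ f (z y))ᶜ ∈ coSmall α :=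
    iInter_mem.mpr fun y => mem_coSmall.mpr (by rw [compl_compl]; exact hz y)
  -- a point of `⋂_{i ∈ σ} f i \ ⋃_{y ∈ Y} f (z y)` outside every `y \ f (z y)` avoids every `y ∈ Y`
  refine le_antisymm (mk_set_le _) ?_
  rw [← mk_inter_eq_of_mem_coSmall (hf _ _ hdisj) hsmall]
  refine mk_le_mk_of_subset fun a ⟨⟨haσ, haz⟩, haY⟩ u hu => ?_
  simp only [Finite.mem_toFinset, mem_iInter, mem_iUnion, exists_prop] at haσ haz haY
  rcases ht hu with ⟨i, rfl⟩ | ⟨y, hy, rfl⟩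
  · exact haσ i hu
  · exact fun hay => haY ⟨y, hy, hu⟩ ⟨hay, fun hazy => haz ⟨_, ⟨⟨y, hy, hu⟩, rfl⟩, hazy⟩⟩

theorem exists_forall_mem_of_isIndependentFamily (hf : IsIndependentFamily f) :
    ∃ p : UUlt α, (∀ i, f i ∈ p.1) ∧ ∀ y ∈ p.1, {i | #(y \ f i : Set α) < #α}.Finite := by
  obtain ⟨p, hp⟩ := exists_forall_mem_of_mk_sInter_eq fun t ht htf =>
    mk_sInter_eq_of_isIndependentFamily hf ht htf
  refine ⟨p, fun i => hp _ (.inl ⟨i, rfl⟩), fun y hy => by_contra fun hinf => ?_⟩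
  exact p.1.compl_mem_iff_notMem.mp (hp _ (.inr ⟨y, hinf, rfl⟩)) hy

theorem exists_isLocalSplitter (α : Type u) [Infinite α] :
    ∃ (p : UUlt α) (U : Set α → Set (UUlt α)), IsLocalSplitter p U := by
  obtain ⟨f, hf⟩ := exists_isIndependentFamily α
  obtain ⟨p, hfp, hp⟩ := exists_forall_mem_of_isIndependentFamily hf
  refine ⟨p, fun w => basicOpen (f w), fun w => ⟨isOpen_basicOpen _, hfp w⟩, fun W hW hpW => ?_⟩
  obtain ⟨_, ⟨y, hy, rfl⟩, hyW⟩ := (isLocalBase_basicOpen p).2 W hW hpW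
  exact (hp y hy).subset fun w hw => mk_diff_lt_of_basicOpen_subset (hyW.trans hw)

end UUlt

/-- For every infinite `α` there is a uniform ultrafilter `p` on `α` whose local
Noetherian type in `u(α)` is `ω` (it has an `ω^op`-like local base) while its
character is `2^|α|`. -/
theorem exists_uniformUltrafilter_locNt_aleph0_character_two_pow
    (α : Type u) [Infinite α] :
    ∃ p : UUlt α, locNt p = ℵ₀ ∧ character p = 2 ^ #α := by
  obtain ⟨p, U, hU⟩ := UUlt.exists_isLocalSplitter α
  have hB := UUlt.isLocalBase_basicOpen p
  have hcard : #(UUlt.basicOpen '' {x | x ∈ p.1}) ≤ #(Set α) :=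
    mk_image_le.trans (mk_subtype_le _)
  have hι : ℵ₀ ≤ #(Set α) := by
    rw [mk_set]
    exact (aleph0_le_mk α).trans (cantor _).le
  refine ⟨p, locNt_eq_aleph0_of_isLocalSplitter hU hB hcard, ?_⟩
  rw [character_eq_of_isLocalSplitter hι hU hB hcard, mk_set]
end

section
/- If a topological space X has a ⟨cf(w(X)), cf(w(X))⟩-splitter, then the Noetherian type of X is at most the weight of X. More generally, for any infinite cardinal κ, a space with a ⟨cf(κ), cf(κ)⟩-splitter also has a ⟨κ, κ⟩-splitter. -/
open Cardinal Set

universe u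

variable {X : Type u}

/-!
A `⟨cf κ, cf κ⟩`-splitter is reindexed along a map `h : κ → cf κ` whose fibres have size
`< κ`: a set of `κ` indices cannot be covered by fewer than `cf κ` fibres, so its image
contains `cf κ` indices, along which the original splitter already kills the interior.

For `Nt X ≤ w(X)`, index a `⟨w, w⟩`-splitter `⟨F_U⟩` by a base `𝓑` of size `≤ w`. The nonempty
sets `U ∩ V` with `V ∈ F_U` form a base, and it is `w^op`-like: a nonempty open `G` lies
inside some member of `F_U` for fewer than `w` indices `U` (otherwise `G` would lie in the
interior of a `w`-fold intersection), and each `F_U` is finite.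
-/

section Cardinal

theorem Cardinal.mk_lt_of_mk_image_lt_cof {α β : Type u} {κ : Cardinal.{u}} (hκ : ℵ₀ ≤ κ)
    {h : α → β} (hfib : ∀ b, #(h ⁻¹' {b}) < κ) {I : Set α} (hI : #(h '' I) < κ.ord.cof) :
    #I < κ := by
  have hcover : I ⊆ ⋃ b : h '' I, h ⁻¹' {(b : β)} := fun x hx =>
    mem_iUnion.mpr ⟨⟨h x, mem_image_of_mem h hx⟩, rfl⟩
  calc #I ≤ #(⋃ b : h '' I, h ⁻¹' {(b : β)}) := mk_le_mk_of_subset hcover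
    _ ≤ #(h '' I) * ⨆ b : h '' I, #(h ⁻¹' {(b : β)}) := mk_iUnion_le _
    _ < κ := mul_lt_of_lt hκ (hI.trans_le (Ordinal.cof_ord_le κ))
        (iSup_lt_of_lt_cof_ord hI fun _ => hfib _)

/-- The fibre of `i` is contained in the initial segment below the `i`-th element of a
cofinal subset of `κ` of size `cf κ`. -/
theorem Cardinal.exists_mk_fiber_lt_of_mk_eq_cof {ι : Type u} {κ : Cardinal.{u}} (hκ : ℵ₀ ≤ κ)
    (hι : #ι = κ.ord.cof) : ∃ h : κ.ord.ToType → ι, ∀ i, #(h ⁻¹' {i}) < κ := by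
  obtain ⟨S, hS, hScard⟩ := Order.exists_cof_eq κ.ord.ToType
  rw [Ordinal.cof_toType] at hScard
  obtain ⟨e⟩ : Nonempty (S ≃ ι) := Cardinal.eq.mp (hScard.trans hι.symm)
  choose g hgS hle using hS
  refine ⟨fun x => e ⟨g x, hgS x⟩, fun i => ?_⟩
  have hfiber : (fun x => e ⟨g x, hgS x⟩) ⁻¹' {i} ⊆ Iic (e.symm i : κ.ord.ToType) := by
    intro x hx
    rw [mem_preimage, mem_singleton_iff, ← Equiv.eq_symm_apply] at hx
    exact hx ▸ hle x
  calc _ ≤ #(Iic (e.symm i : κ.ord.ToType)) := mk_le_mk_of_subset hfiber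
    _ ≤ #(Iio (e.symm i : κ.ord.ToType)) + 1 := by rw [← Iio_insert]; exact mk_insert_le
    _ < κ := add_lt_of_lt hκ (by simpa using mk_Iio_lt (e.symm i : κ.ord.ToType))
        (one_lt_aleph0.trans_le hκ)

theorem Cardinal.mk_sigma_lt_of_finite {α : Type u} {β : α → Type u} [∀ a, Finite (β a)]
    {κ : Cardinal.{u}} (hκ : ℵ₀ ≤ κ) (hα : #α < κ) : #(Σ a, β a) < κ := by
  rcases finite_or_infinite α with hfin | hinf
  · exact (lt_aleph0_of_finite _).trans_le hκ
  calc #(Σ a, β a) = sum fun a => #(β a) := mk_sigma _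
    _ ≤ sum fun _ : α => ℵ₀ := sum_le_sum _ _ fun _ => (lt_aleph0_of_finite _).le
    _ = #α := by rw [sum_const', mul_aleph0_eq (aleph0_le_mk α)]
    _ < κ := hα

end Cardinal

section Splitter

variable [TopologicalSpace X] {ι ι' : Type u} {F : ι → Set (Set X)} {κ κ' : Cardinal.{u}}

theorem IsSplitter.comp (hF : IsSplitter F κ) (h : ι' → ι)
    (hh : ∀ I : Set ι', #I = κ' → ∃ J ⊆ h '' I, #J = κ) : IsSplitter (F ∘ h) κ' := by
  classical
  refine ⟨fun i => hF.1 (h i), fun I U hI hU => ?_⟩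
  obtain ⟨J, hJI, hJ⟩ := hh I hI
  choose s hsI hsh using fun j (hj : j ∈ J) => hJI hj
  let V : ι → Set X := fun j => if hj : j ∈ J then U (s j hj) else Set.univ
  have hV : ∀ j ∈ J, V j ∈ F j := fun j hj => by
    simpa only [V, dif_pos hj, Function.comp_apply, hsh j hj] using hU _ (hsI j hj)
  have hsub : ⋂ i ∈ I, U i ⊆ ⋂ j ∈ J, V j := by
    simp only [subset_def, mem_iInter]
    intro y hy j hj
    simpa only [V, dif_pos hj] using hy _ (hsI j hj)
  exact subset_empty_iff.mp (hF.2 J V hJ hV ▸ interior_mono hsub)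

theorem IsSplitter.comp_of_injective (hF : IsSplitter F κ) {h : ι' → ι}
    (hh : Function.Injective h) : IsSplitter (F ∘ h) κ :=
  hF.comp h fun I hI => ⟨h '' I, subset_rfl, by rw [mk_image_eq hh, hI]⟩

theorem IsSplitter.comp_of_mk_fiber_lt (hF : IsSplitter F κ.ord.cof) (hκ : ℵ₀ ≤ κ)
    {h : ι' → ι} (hfib : ∀ i, #(h ⁻¹' {i}) < κ) : IsSplitter (F ∘ h) κ :=
  hF.comp h fun _ hI => le_mk_iff_exists_subset.mp <| not_lt.mp fun hlt =>
    (mk_lt_of_mk_image_lt_cof hκ hfib hlt).ne hI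

theorem exists_isSplitter_of_isSplitter_cof (hκ : ℵ₀ ≤ κ)
    (h : ∃ (ι : Type u) (F : ι → Set (Set X)), #ι = κ.ord.cof ∧ IsSplitter F κ.ord.cof) :
    ∃ (ι : Type u) (F : ι → Set (Set X)), #ι = κ ∧ IsSplitter F κ := by
  obtain ⟨ι, F, hι, hF⟩ := h
  obtain ⟨h, hfib⟩ := exists_mk_fiber_lt_of_mk_eq_cof hκ hι
  exact ⟨_, F ∘ h, mk_ord_toType κ, hF.comp_of_mk_fiber_lt hκ hfib⟩

theorem IsSplitter.mk_setOf_subset_lt (hF : IsSplitter F κ) (hι : #ι ≤ κ) {G : Set X}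
    (hG : IsOpen G) (hGne : G.Nonempty) : #{i | ∃ V ∈ F i, G ⊆ V} < κ := by
  refine ((mk_set_le _).trans hι).lt_of_ne fun hT => ?_
  choose! V hVF hGV using fun i (hi : i ∈ {i | ∃ V ∈ F i, G ⊆ V}) => hi
  have hGsub : G ⊆ interior (⋂ i ∈ {i | ∃ V ∈ F i, G ⊆ V}, V i) :=
    interior_maximal (subset_iInter₂ hGV) hG
  rw [hF.2 _ V hT hVF] at hGsub
  exact hGne.ne_empty (subset_empty_iff.mp hGsub)

end Splitter

section Refinement

def refineBy (B : Set (Set X)) (F : B → Set (Set X)) : Set (Set X) :=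
  {W | W.Nonempty ∧ ∃ U : B, ∃ V ∈ F U, W = (U : Set X) ∩ V}

variable {B : Set (Set X)} {F : B → Set (Set X)}

theorem mk_supersets_refineBy_le (G : Set X) :
    #{W : Set X // W ∈ refineBy B F ∧ G ⊆ W} ≤
      #(Σ U : {U | ∃ V ∈ F U, G ⊆ V}, F U) := by
  have key : ∀ W : {W : Set X // W ∈ refineBy B F ∧ G ⊆ W},
      ∃ p : Σ U : {U | ∃ V ∈ F U, G ⊆ V}, F U, (W : Set X) = (p.1.1 : Set X) ∩ p.2 := by
    rintro ⟨_, ⟨-, U, V, hV, rfl⟩, hGW⟩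
    exact ⟨⟨⟨U, V, hV, hGW.trans inter_subset_right⟩, ⟨V, hV⟩⟩, rfl⟩
  choose φ hφ using key
  exact mk_le_of_injective (f := φ) fun W W' h => Subtype.ext <| by rw [hφ W, hφ W', h]

variable [TopologicalSpace X]

theorem isBase_refineBy (hB : IsBase B) (hFopen : ∀ U, ∀ V ∈ F U, IsOpen V)
    (hFcover : ∀ U, ⋃₀ F U = Set.univ) : IsBase (refineBy B F) := by
  refine ⟨?_, fun W hW p hp => ?_⟩
  · rintro _ ⟨-, U, V, hV, rfl⟩
    exact (hB.1 U U.2).inter (hFopen U V hV)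
  obtain ⟨U, hU, hpU, hUW⟩ := hB.2 W hW p hp
  obtain ⟨V, hV, hpV⟩ : p ∈ ⋃₀ F ⟨U, hU⟩ := hFcover _ ▸ mem_univ p
  exact ⟨U ∩ V, ⟨⟨p, hpU, hpV⟩, ⟨U, hU⟩, V, hV, rfl⟩, ⟨hpU, hpV⟩, inter_subset_left.trans hUW⟩

theorem isOpLike_refineBy {κ : Cardinal.{u}} (hκ : ℵ₀ ≤ κ) (hB : ∀ U ∈ B, IsOpen U)
    (hBκ : #B ≤ κ) (hF : IsSplitter F κ) : IsOpLike (refineBy B F) κ := by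
  rintro _ ⟨hne, U, V, hV, rfl⟩
  have hT := hF.mk_setOf_subset_lt hBκ ((hB U U.2).inter ((hF.1 U).2.1 V hV)) hne
  have : ∀ U', Finite (F U') := fun U' => (hF.1 U').1.to_subtype
  exact (mk_supersets_refineBy_le _).trans_lt (mk_sigma_lt_of_finite hκ hT)

end Refinement

section NoetherianType

variable [TopologicalSpace X]

theorem weight_mem : weight X ∈ {κ | ℵ₀ ≤ κ ∧ ∃ B : Set (Set X), IsBase B ∧ #B ≤ κ} :=
  csInf_mem ⟨max ℵ₀ #(Set X), le_max_left _ _, {U | IsOpen U},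
    ⟨fun _ hU => hU, fun W hW _ hp => ⟨W, hW, hp, subset_rfl⟩⟩,
    (mk_set_le _).trans (le_max_right _ _)⟩

theorem nt_le_of_isBase_of_isOpLike {κ : Cardinal.{u}} (hκ : ℵ₀ ≤ κ) {B : Set (Set X)}
    (hB : IsBase B) (hBκ : IsOpLike B κ) : Nt X ≤ κ :=
  csInf_le' ⟨hκ, B, hB, hBκ⟩

theorem nt_le_of_isSplitter {κ : Cardinal.{u}} (hκ : ℵ₀ ≤ κ) {B : Set (Set X)} (hB : IsBase B)
    (hBκ : #B ≤ κ) {ι : Type u} {F : ι → Set (Set X)} (hι : #ι = κ) (hF : IsSplitter F κ) :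
    Nt X ≤ κ := by
  obtain ⟨f⟩ : Nonempty (B ↪ ι) := by rwa [← le_def, hι]
  have hFf : IsSplitter (F ∘ f) κ := hF.comp_of_injective f.injective
  exact nt_le_of_isBase_of_isOpLike hκ
    (isBase_refineBy hB (fun U => (hFf.1 U).2.1) fun U => (hFf.1 U).2.2)
    (isOpLike_refineBy hκ hB.1 hBκ hFf)

end NoetherianType

/-- If `X` has a `⟨cf w(X), cf w(X)⟩`-splitter then `Nt(X) ≤ w(X)`; more generally,
for any infinite `κ`, a space with a `⟨cf κ, cf κ⟩`-splitter has a `⟨κ,κ⟩`-splitter. -/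
theorem splitter_cf_implies [TopologicalSpace X] :
    ((∃ (ι : Type u) (F : ι → Set (Set X)),
        #ι = (weight X).ord.cof ∧ IsSplitter F ((weight X).ord.cof)) →
      Nt X ≤ weight X) ∧
    ∀ κ : Cardinal.{u}, ℵ₀ ≤ κ →
      (∃ (ι : Type u) (F : ι → Set (Set X)), #ι = κ.ord.cof ∧ IsSplitter F κ.ord.cof) →
      ∃ (ι : Type u) (F : ι → Set (Set X)), #ι = κ ∧ IsSplitter F κ := by
  refine ⟨fun h => ?_, fun κ hκ => exists_isSplitter_of_isSplitter_cof hκ⟩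
  obtain ⟨hw, B, hB, hBw⟩ := weight_mem (X := X)
  obtain ⟨ι, F, hι, hF⟩ := exists_isSplitter_of_isSplitter_cof hw h
  exact nt_le_of_isSplitter hw hB hBw hι hF
end
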